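/- Let g ∈ L¹(ℂ, ν) where dν(z) = (2π)^{-1} e^{-|z|²/2} dz, and define (Tf)(z) = ∫_ℂ f(w) g(z−w) e^{z w̄} dμ(w) for f ∈ L²(ℂ, μ), where dμ(z) = π^{-1}e^{-|z|²}dz. Then T is a bounded linear operator on L²(ℂ, μ) with operator norm ‖T‖ ≤ 2‖g‖_{L¹(ℂ,ν)}. -/

import Mathlib

/-!
Put `F = |f| e^{-|·|²/2}` and `G = |g| e^{-|·|²/2}`. Completing the square,
`e^{-|w|²} |e^{z w̄}| e^{-|z|²/2} = e^{-|w|²/2} e^{-|z-w|²/2}`, so that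
`π |Tf(z)| e^{-|z|²/2} ≤ (F ⋆ G)(z)` for Lebesgue measure. Since `‖F‖₂² = π ‖f‖²_{L²(μ)}` and
`‖G‖₁ = 2π ‖g‖_{L¹(ν)}`, Young's inequality `‖F ⋆ G‖₂ ≤ ‖G‖₁ ‖F‖₂` (Cauchy–Schwarz against the
weight `G`, then Tonelli) gives `π³ ‖Tf‖²_{L²(μ)} ≤ (2π ‖g‖_{L¹(ν)})² π ‖f‖²_{L²(μ)}`.
-/

open Complex MeasureTheory

/-- The Gaussian measure dμ(z) = π⁻¹ e^{-|z|²} dz on ℂ. -/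
noncomputable def gaussMeasure : Measure ℂ :=
  volume.withDensity fun z => ENNReal.ofReal (Real.exp (-‖z‖ ^ 2) / Real.pi)

/-- The Gaussian measure dν(z) = (2π)⁻¹ e^{-|z|²/2} dz on ℂ. -/
noncomputable def gaussMeasureHalf : Measure ℂ :=
  volume.withDensity fun z => ENNReal.ofReal (Real.exp (-‖z‖ ^ 2 / 2) / (2 * Real.pi))

open ComplexConjugate
open scoped ENNReal

theorem lintegral_mul_sq_le {α : Type*} [MeasurableSpace α] {μ : Measure α} {F G : α → ℝ≥0∞}
    (hF : AEMeasurable F μ) (hG : AEMeasurable G μ) :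
    (∫⁻ a, F a * G a ∂μ) ^ 2 ≤ (∫⁻ a, G a ∂μ) * ∫⁻ a, F a ^ 2 * G a ∂μ := by
  have hsqrt : ∀ x : ℝ≥0∞, (x ^ (2⁻¹ : ℝ)) ^ 2 = x := fun x => by
    rw [← ENNReal.rpow_two, ENNReal.rpow_inv_rpow two_ne_zero]
  have h := ENNReal.lintegral_mul_le_Lp_mul_Lq μ Real.HolderConjugate.two_two
    (hF.mul (hG.pow_const (2⁻¹ : ℝ))) (hG.pow_const (2⁻¹ : ℝ))
  simp only [Pi.mul_apply, one_div, ENNReal.rpow_two, mul_pow, hsqrt, mul_assoc, ← sq] at h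
  calc (∫⁻ a, F a * G a ∂μ) ^ 2
      ≤ ((∫⁻ a, F a ^ 2 * G a ∂μ) ^ (2⁻¹ : ℝ) * (∫⁻ a, G a ∂μ) ^ (2⁻¹ : ℝ)) ^ 2 := by gcongr
    _ = (∫⁻ a, G a ∂μ) * ∫⁻ a, F a ^ 2 * G a ∂μ := by rw [mul_pow, hsqrt, hsqrt, mul_comm]

theorem lintegral_sq_convolution_le {G : Type*} [MeasurableSpace G] [AddGroup G]
    [MeasurableAdd₂ G] [MeasurableNeg G] {μ : Measure G} [SFinite μ] [μ.IsAddRightInvariant]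
    {f g : G → ℝ≥0∞} (hf : Measurable f) (hg : Measurable g) :
    ∫⁻ x, (∫⁻ t, f (x - t) * g t ∂μ) ^ 2 ∂μ ≤ (∫⁻ t, g t ∂μ) ^ 2 * ∫⁻ x, f x ^ 2 ∂μ := by
  have hprod : Measurable fun p : G × G => f (p.1 - p.2) ^ 2 * g p.2 :=
    ((hf.comp measurable_sub).pow_const 2).mul (hg.comp measurable_snd)
  calc ∫⁻ x, (∫⁻ t, f (x - t) * g t ∂μ) ^ 2 ∂μ
      ≤ ∫⁻ x, (∫⁻ t, g t ∂μ) * ∫⁻ t, f (x - t) ^ 2 * g t ∂μ ∂μ := by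
        exact lintegral_mono fun x =>
          lintegral_mul_sq_le (hf.comp (measurable_const_sub x)).aemeasurable hg.aemeasurable
    _ = (∫⁻ t, g t ∂μ) * ∫⁻ t, (∫⁻ x, f (x - t) ^ 2 ∂μ) * g t ∂μ := by
        rw [lintegral_const_mul _ hprod.lintegral_prod_right',
          lintegral_lintegral_swap hprod.aemeasurable]
        refine congrArg _ (lintegral_congr fun t => ?_)
        exact lintegral_mul_const (μ := μ) (g t) ((hf.comp (measurable_sub_const t)).pow_const 2)
    _ = (∫⁻ t, g t ∂μ) ^ 2 * ∫⁻ x, f x ^ 2 ∂μ := by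
        simp_rw [lintegral_sub_right_eq_self (fun x => f x ^ 2), lintegral_const_mul _ hg]
        ring

theorem sq_eLpNorm_two {α E : Type*} [MeasurableSpace α] [NormedAddCommGroup E] (μ : Measure α)
    (f : α → E) : eLpNorm f 2 μ ^ 2 = ∫⁻ x, ‖f x‖ₑ ^ 2 ∂μ := by
  simpa using eLpNorm_nnreal_pow_eq_lintegral (f := f) (μ := μ) (p := 2) two_ne_zero

theorem ofReal_mul_lintegral_withDensity_ofReal_div {α : Type*} [MeasurableSpace α]
    (μ : Measure α) {ρ : α → ℝ} (hρ : Measurable ρ) {c : ℝ} (hc : 0 < c) (h : α → ℝ≥0∞) :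
    ENNReal.ofReal c * ∫⁻ a, h a ∂μ.withDensity (fun a => ENNReal.ofReal (ρ a / c)) =
      ∫⁻ a, ENNReal.ofReal (ρ a) * h a ∂μ := by
  rw [lintegral_withDensity_eq_lintegral_mul_non_measurable _ (hρ.div_const c).ennreal_ofReal
      (ae_of_all _ fun _ => ENNReal.ofReal_lt_top),
    ← lintegral_const_mul' _ _ ENNReal.ofReal_ne_top]
  refine lintegral_congr fun a => ?_
  rw [Pi.mul_apply, ← mul_assoc, ← ENNReal.ofReal_mul hc.le, mul_div_cancel₀ _ hc.ne']

noncomputable def gaussWeight (z : ℂ) : ℝ≥0∞ := ENNReal.ofReal (Real.exp (-‖z‖ ^ 2 / 2))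

theorem measurable_gaussWeight : Measurable gaussWeight := by
  unfold gaussWeight; fun_prop

theorem gaussWeight_sq (z : ℂ) : gaussWeight z ^ 2 = ENNReal.ofReal (Real.exp (-‖z‖ ^ 2)) := by
  rw [gaussWeight, ← ENNReal.ofReal_pow (Real.exp_pos _).le, ← Real.exp_nat_mul]
  ring_nf

theorem ofReal_pi_mul_lintegral_gaussMeasure (h : ℂ → ℝ≥0∞) :
    ENNReal.ofReal Real.pi * ∫⁻ z, h z ∂gaussMeasure = ∫⁻ z, gaussWeight z ^ 2 * h z := by
  simp_rw [gaussWeight_sq]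
  exact ofReal_mul_lintegral_withDensity_ofReal_div _ (by fun_prop) Real.pi_pos h

theorem two_mul_ofReal_pi_mul_lintegral_gaussMeasureHalf (h : ℂ → ℝ≥0∞) :
    2 * ENNReal.ofReal Real.pi * ∫⁻ z, h z ∂gaussMeasureHalf = ∫⁻ z, gaussWeight z * h z := by
  rw [← ENNReal.ofReal_ofNat 2, ← ENNReal.ofReal_mul zero_le_two]
  exact ofReal_mul_lintegral_withDensity_ofReal_div _ (by fun_prop) Real.two_pi_pos h

theorem volume_absolutelyContinuous_gaussMeasureHalf : (volume : Measure ℂ) ≪ gaussMeasureHalf :=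
  withDensity_absolutelyContinuous' (by fun_prop)
    (ae_of_all _ fun _ => (ENNReal.ofReal_pos.mpr (by positivity)).ne')

theorem gaussWeight_sq_mul_enorm_exp_mul_gaussWeight (z w : ℂ) :
    gaussWeight w ^ 2 * ‖cexp (z * conj w)‖ₑ * gaussWeight z =
      gaussWeight w * gaussWeight (z - w) := by
  rw [gaussWeight_sq, ← ofReal_norm, Complex.norm_exp]
  simp only [gaussWeight, ← ENNReal.ofReal_mul (Real.exp_pos _).le, ← Real.exp_add]
  congr 2
  simp only [Complex.sq_norm, Complex.normSq_apply, mul_re, conj_re, conj_im, sub_re, sub_im]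
  ring

instance : SFinite gaussMeasure := by
  unfold gaussMeasure; infer_instance

noncomputable def fockConv (g f : ℂ → ℂ) (z : ℂ) : ℂ :=
  ∫ w, f w * g (z - w) * cexp (z * conj w) ∂gaussMeasure

theorem fockConv_congr_ae {f₁ f₂ g₁ g₂ : ℂ → ℂ} (hf : f₁ =ᵐ[gaussMeasure] f₂)
    (hg : g₁ =ᵐ[volume] g₂) : fockConv g₁ f₁ = fockConv g₂ f₂ := by
  funext z
  have hgz : (fun w => g₁ (z - w)) =ᵐ[gaussMeasure] fun w => g₂ (z - w) :=
    (withDensity_absolutelyContinuous _ _).ae_eq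
      ((Measure.measurePreserving_sub_left volume z).quasiMeasurePreserving.ae_eq_comp hg)
  refine integral_congr_ae ?_
  filter_upwards [hf, hgz] with w hfw hgw
  rw [hfw, hgw]

theorem stronglyMeasurable_fockConv {f g : ℂ → ℂ} (hf : Measurable f) (hg : Measurable g) :
    StronglyMeasurable (fockConv g f) :=
  StronglyMeasurable.integral_prod_right'
    (f := fun p : ℂ × ℂ => f p.2 * g (p.1 - p.2) * cexp (p.1 * conj p.2)) (by fun_prop)

theorem ofReal_pi_mul_enorm_fockConv_mul_gaussWeight_le (g f : ℂ → ℂ) (z : ℂ) :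
    ENNReal.ofReal Real.pi * (‖fockConv g f z‖ₑ * gaussWeight z) ≤
      ∫⁻ t, ‖f (z - t)‖ₑ * gaussWeight (z - t) * (‖g t‖ₑ * gaussWeight t) := by
  calc ENNReal.ofReal Real.pi * (‖fockConv g f z‖ₑ * gaussWeight z)
      ≤ ENNReal.ofReal Real.pi *
          ((∫⁻ w, ‖f w * g (z - w) * cexp (z * conj w)‖ₑ ∂gaussMeasure) * gaussWeight z) := by
        gcongr
        exact enorm_integral_le_lintegral_enorm _
    _ = ∫⁻ w, gaussWeight w ^ 2 * ‖f w * g (z - w) * cexp (z * conj w)‖ₑ * gaussWeight z := by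
        rw [← mul_assoc, ofReal_pi_mul_lintegral_gaussMeasure,
          lintegral_mul_const' (gaussWeight z) _ ENNReal.ofReal_ne_top]
    _ = ∫⁻ w, ‖f w‖ₑ * gaussWeight w * (‖g (z - w)‖ₑ * gaussWeight (z - w)) := by
        refine lintegral_congr fun w => ?_
        calc gaussWeight w ^ 2 * ‖f w * g (z - w) * cexp (z * conj w)‖ₑ * gaussWeight z
            = ‖f w‖ₑ * ‖g (z - w)‖ₑ *
                (gaussWeight w ^ 2 * ‖cexp (z * conj w)‖ₑ * gaussWeight z) := by
              rw [enorm_mul, enorm_mul]; ring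
          _ = _ := by rw [gaussWeight_sq_mul_enorm_exp_mul_gaussWeight]; ring
    _ = ∫⁻ t, ‖f (z - t)‖ₑ * gaussWeight (z - t) * (‖g t‖ₑ * gaussWeight t) := by
        rw [← lintegral_sub_left_eq_self _ z]
        simp only [sub_sub_cancel]

theorem eLpNorm_fockConv_le {f g : ℂ → ℂ} (hf : Measurable f) (hg : Measurable g) :
    eLpNorm (fockConv g f) 2 gaussMeasure ≤
      2 * (∫⁻ z, ‖g z‖ₑ ∂gaussMeasureHalf) * eLpNorm f 2 gaussMeasure := by
  set π' := ENNReal.ofReal Real.pi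
  have hπ0 : π' ≠ 0 := (ENNReal.ofReal_pos.mpr Real.pi_pos).ne'
  have hπtop : π' ≠ ∞ := ENNReal.ofReal_ne_top
  set F := fun u => ‖f u‖ₑ * gaussWeight u
  set G := fun u => ‖g u‖ₑ * gaussWeight u
  have hF : ∫⁻ u, F u ^ 2 = π' * eLpNorm f 2 gaussMeasure ^ 2 := by
    rw [sq_eLpNorm_two, ofReal_pi_mul_lintegral_gaussMeasure]
    simp only [F, mul_pow, mul_comm]
  have hG : ∫⁻ u, G u = 2 * π' * ∫⁻ z, ‖g z‖ₑ ∂gaussMeasureHalf := by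
    rw [two_mul_ofReal_pi_mul_lintegral_gaussMeasureHalf]
    simp only [G, mul_comm]
  have hsq : π' ^ 3 * eLpNorm (fockConv g f) 2 gaussMeasure ^ 2 ≤
      π' ^ 3 * (2 * (∫⁻ z, ‖g z‖ₑ ∂gaussMeasureHalf) * eLpNorm f 2 gaussMeasure) ^ 2 :=
    calc π' ^ 3 * eLpNorm (fockConv g f) 2 gaussMeasure ^ 2
        = ∫⁻ z, (π' * (‖fockConv g f z‖ₑ * gaussWeight z)) ^ 2 := by
          rw [sq_eLpNorm_two, pow_succ, mul_assoc, ofReal_pi_mul_lintegral_gaussMeasure,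
            ← lintegral_const_mul' _ _ (ENNReal.pow_ne_top hπtop)]
          simp only [mul_pow, mul_comm, mul_left_comm]
      _ ≤ ∫⁻ z, (∫⁻ t, F (z - t) * G t) ^ 2 := by
          gcongr with z
          exact ofReal_pi_mul_enorm_fockConv_mul_gaussWeight_le g f z
      _ ≤ (∫⁻ u, G u) ^ 2 * ∫⁻ u, F u ^ 2 :=
          lintegral_sq_convolution_le (hf.enorm.mul measurable_gaussWeight)
            (hg.enorm.mul measurable_gaussWeight)
      _ = π' ^ 3 * (2 * (∫⁻ z, ‖g z‖ₑ ∂gaussMeasureHalf) * eLpNorm f 2 gaussMeasure) ^ 2 := by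
          rw [hF, hG]; ring
  rwa [ENNReal.mul_le_mul_iff_right (pow_ne_zero 3 hπ0) (ENNReal.pow_ne_top hπtop),
    ENNReal.pow_le_pow_left_iff two_ne_zero] at hsq

/-- For g ∈ L¹(ℂ, ν), the operator (Tf)(z) = ∫ f(w) g(z−w) e^{z w̄} dμ(w) is a
bounded linear operator on L²(ℂ, μ) with ‖T‖ ≤ 2‖g‖_{L¹(ℂ,ν)}. -/
theorem integral_operator_bounded (g : ℂ → ℂ) (hg : Integrable g gaussMeasureHalf)
    (T : (ℂ → ℂ) → ℂ → ℂ)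
    (hT : ∀ f z, T f z
      = ∫ w, f w * g (z - w) * Complex.exp (z * (starRingEnd ℂ) w) ∂gaussMeasure) :
    ∀ f : ℂ → ℂ, MemLp f 2 gaussMeasure →
      MemLp (T f) 2 gaussMeasure ∧
      eLpNorm (T f) 2 gaussMeasure
        ≤ 2 * ENNReal.ofReal (∫ z, ‖g z‖ ∂gaussMeasureHalf) * eLpNorm f 2 gaussMeasure := by
  intro f hf
  set f' := hf.aemeasurable.mk f
  set g' := hg.aemeasurable.mk g
  have hff' : f =ᵐ[gaussMeasure] f' := hf.aemeasurable.ae_eq_mk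
  have hgg' : g =ᵐ[gaussMeasureHalf] g' := hg.aemeasurable.ae_eq_mk
  have hTf : T f = fockConv g' f' :=
    (funext (hT f)).trans
      (fockConv_congr_ae hff' (volume_absolutelyContinuous_gaussMeasureHalf.ae_eq hgg'))
  have hbound : eLpNorm (T f) 2 gaussMeasure
      ≤ 2 * ENNReal.ofReal (∫ z, ‖g z‖ ∂gaussMeasureHalf) * eLpNorm f 2 gaussMeasure := by
    rw [hTf, ofReal_integral_norm_eq_lintegral_enorm hg,
      lintegral_congr_ae (hgg'.mono fun z hz => by rw [hz]), eLpNorm_congr_ae hff']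
    exact eLpNorm_fockConv_le hf.aemeasurable.measurable_mk hg.aemeasurable.measurable_mk
  refine ⟨⟨?_, hbound.trans_lt ?_⟩, hbound⟩
  · rw [hTf]
    exact (stronglyMeasurable_fockConv hf.aemeasurable.measurable_mk
      hg.aemeasurable.measurable_mk).aestronglyMeasurable
  · exact ENNReal.mul_lt_top (ENNReal.mul_lt_top (by norm_num) ENNReal.ofReal_lt_top) hf.2
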